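/- Let 0 < q < 1 and z ≠ 0 complex, and let λ ∈ [0,1). Then ∑_{k=0}^n q^{k²}(-e^{2λπi}/z)^k · (q;q)_∞/((q;q)_k (q;q)_{n-k}) = A_q(e^{2λπi}/z) + r_n with |r_n| ≤ (2(-q³;q)_∞ B_q(|z|^{-1})/(q;q)_∞)·( q^{n/2} + q^{n²/4}/|z|^{⌊n/2⌋} ) for n sufficiently large. -/

import Mathlib

/-!
Put `w = e^{2λπi}/z`. The `k`-th summand is `a_k · (q;q)_∞/(q;q)_{n-k}`, where `a_k` is the
`k`-th term of `A_q(w)`, and `0 ≤ 1 - (q;q)_∞/(q;q)_m ≤ q^{m+1}/((1-q)(q;q)_∞)`. So, with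
`b_k = |a_k|` the terms of `B_q(|w|)`, the error is at most
`((1-q)(q;q)_∞)⁻¹ ∑_{k ≤ n} b_k q^{n-k+1} + ∑_{k > n} b_k`.
For `k ≤ n/2` we have `q^{n-k+1} ≤ q^{n/2}`, which gives the first error term. What is left is
bounded by the tail of `B_q(|w|)` from `m = ⌊n/2⌋ + 1`. Once `q^{n/2}|w|` is small, this tail
is dominated by a geometric series of ratio `1/2`, so it is at most
`2 q^{m²}|w|^m/(q;q)_∞ ≤ (1-q) q^{n²/4}|w|^{⌊n/2⌋}`, as `m² ≥ n²/4 + n/2`.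
Finally `(1-q)⁻¹ ≤ 2(-q³;q)_∞`, because `(-q³;q)_∞ ≥ 1 + q³/(1-q)`.
-/

open Complex

/-- The q-Pochhammer symbol `(q;q)_k = ∏_{j=1}^k (1 - q^j)`. -/
noncomputable def qPoch (q : ℝ) (k : ℕ) : ℝ := ∏ j ∈ Finset.range k, (1 - q ^ (j + 1))

/-- `(q;q)_∞ = ∏_{j=1}^∞ (1 - q^j)`. -/
noncomputable def qPochInf (q : ℝ) : ℝ := ∏' j : ℕ, (1 - q ^ (j + 1))

/-- `(-q³;q)_∞ = ∏_{j=0}^∞ (1 + q^{j+3})`. -/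
noncomputable def negQ3PochInf (q : ℝ) : ℝ := ∏' j : ℕ, (1 + q ^ (j + 3))

/-- Ramanujan's function `A_q(w) = ∑_{k=0}^∞ q^{k²} (-w)^k / (q;q)_k`. -/
noncomputable def Aq (q : ℝ) (w : ℂ) : ℂ := ∑' k : ℕ, (q : ℂ) ^ (k ^ 2) * (-w) ^ k / (qPoch q k : ℂ)

/-- `B_q(x) = ∑_{k=0}^∞ q^{k²} x^k / (q;q)_k`. -/
noncomputable def Bq (q x : ℝ) : ℝ := ∑' k : ℕ, q ^ (k ^ 2) * x ^ k / qPoch q k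

open Filter Topology

lemma Finset.one_add_sum_le_prod_one_add {ι : Type*} (s : Finset ι) {a : ι → ℝ}
    (ha : ∀ i ∈ s, 0 ≤ a i) : 1 + ∑ i ∈ s, a i ≤ ∏ i ∈ s, (1 + a i) := by
  classical
  induction s using Finset.induction_on with
  | empty => simp
  | insert i s hi ih =>
    rw [Finset.sum_insert hi, Finset.prod_insert hi]
    have hs := ih fun j hj => ha j (Finset.mem_insert_of_mem hj)
    have hai := ha i (Finset.mem_insert_self i s)
    have hsum : 0 ≤ ∑ j ∈ s, a j := Finset.sum_nonneg fun j hj => ha j (Finset.mem_insert_of_mem hj)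
    nlinarith

lemma Summable.sum_Ico_add_tsum_nat_add {G : Type*} [AddCommGroup G] [TopologicalSpace G]
    [IsTopologicalAddGroup G] [T2Space G] {f : ℕ → G} (hf : Summable f) {m K : ℕ} (h : m ≤ K) :
    ∑ i ∈ Finset.Ico m K, f i + ∑' i, f (i + K) = ∑' i, f (i + m) := by
  have hK := hf.sum_add_tsum_nat_add K
  have hm := hf.sum_add_tsum_nat_add m
  rw [← Finset.sum_range_add_sum_Ico f h] at hK
  calc ∑ i ∈ Finset.Ico m K, f i + ∑' i, f (i + K)
      = ∑ i ∈ Finset.range m, f i + ∑ i ∈ Finset.Ico m K, f i + ∑' i, f (i + K)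
        - ∑ i ∈ Finset.range m, f i := by abel
    _ = ∑' i, f (i + m) := by rw [hK, ← hm]; abel

lemma pow_le_rpow_of_le {q : ℝ} (hq0 : 0 < q) (hq1 : q ≤ 1) {N : ℕ} {t : ℝ} (h : t ≤ N) :
    q ^ N ≤ q ^ t :=
  Real.rpow_natCast q N ▸ Real.rpow_le_rpow_of_exponent_ge hq0 hq1 h

lemma qPoch_zero (q : ℝ) : qPoch q 0 = 1 := Finset.prod_range_zero _

lemma qPoch_succ (q : ℝ) (k : ℕ) : qPoch q (k + 1) = qPoch q k * (1 - q ^ (k + 1)) :=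
  Finset.prod_range_succ _ _

section QPochhammer

variable {q : ℝ}

lemma qPoch_pos (hq0 : 0 ≤ q) (hq1 : q < 1) (k : ℕ) : 0 < qPoch q k :=
  Finset.prod_pos fun j _ => sub_pos.mpr (pow_lt_one₀ hq0 hq1 j.succ_ne_zero)

lemma qPoch_antitone (hq0 : 0 ≤ q) (hq1 : q < 1) : Antitone (qPoch q) :=
  antitone_nat_of_succ_le fun k => by
    rw [qPoch_succ]
    exact mul_le_of_le_one_right (qPoch_pos hq0 hq1 k).le
      (sub_le_self _ (pow_nonneg hq0 _))

lemma qPoch_le_one (hq0 : 0 ≤ q) (hq1 : q < 1) (k : ℕ) : qPoch q k ≤ 1 :=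
  qPoch_zero q ▸ qPoch_antitone hq0 hq1 k.zero_le

lemma qPoch_sub_qPoch_le_sum (hq0 : 0 ≤ q) (hq1 : q < 1) {m K : ℕ} (h : m ≤ K) :
    qPoch q m - qPoch q K ≤ ∑ j ∈ Finset.Ico m K, q ^ (j + 1) := by
  induction K, h using Nat.le_induction with
  | base => simp
  | succ n hn ih =>
    have hdrop : qPoch q n * q ^ (n + 1) ≤ q ^ (n + 1) :=
      mul_le_of_le_one_left (pow_nonneg hq0 _) (qPoch_le_one hq0 hq1 n)
    rw [qPoch_succ, Finset.sum_Ico_succ_top hn]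
    linarith

lemma hasProd_qPochInf (hq0 : 0 ≤ q) (hq1 : q < 1) :
    HasProd (fun j : ℕ => 1 - q ^ (j + 1)) (qPochInf q) := by
  have hsum : Summable fun j : ℕ => -q ^ (j + 1) :=
    ((summable_nat_add_iff 1).mpr (summable_geometric_of_lt_one hq0 hq1)).neg
  unfold qPochInf
  simpa only [← sub_eq_add_neg] using (Real.multipliable_one_add_of_summable hsum).hasProd

lemma tendsto_qPoch (hq0 : 0 ≤ q) (hq1 : q < 1) :
    Tendsto (qPoch q) atTop (𝓝 (qPochInf q)) :=
  (hasProd_qPochInf hq0 hq1).tendsto_prod_nat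

lemma qPochInf_le_qPoch (hq0 : 0 ≤ q) (hq1 : q < 1) (m : ℕ) : qPochInf q ≤ qPoch q m :=
  (qPoch_antitone hq0 hq1).le_of_tendsto (tendsto_qPoch hq0 hq1) m

lemma qPochInf_le_one (hq0 : 0 ≤ q) (hq1 : q < 1) : qPochInf q ≤ 1 :=
  qPoch_zero q ▸ qPochInf_le_qPoch hq0 hq1 0

lemma qPoch_sub_qPochInf_le (hq0 : 0 ≤ q) (hq1 : q < 1) (m : ℕ) :
    qPoch q m - qPochInf q ≤ q ^ (m + 1) / (1 - q) := by
  refine le_of_tendsto ((tendsto_qPoch hq0 hq1).const_sub _) ?_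
  filter_upwards [eventually_ge_atTop m] with K hK
  calc qPoch q m - qPoch q K ≤ ∑ j ∈ Finset.Ico m K, q ^ (j + 1) :=
        qPoch_sub_qPoch_le_sum hq0 hq1 hK
    _ = q * ∑ j ∈ Finset.Ico m K, q ^ j := by simp only [Finset.mul_sum, pow_succ']
    _ ≤ q * (q ^ m / (1 - q)) := by gcongr; exact geom_sum_Ico_le_of_lt_one hq0 hq1
    _ = q ^ (m + 1) / (1 - q) := by ring

lemma qPochInf_pos (hq0 : 0 ≤ q) (hq1 : q < 1) : 0 < qPochInf q := by
  have hne : qPochInf q ≠ 0 := by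
    have hsum : Summable fun j : ℕ => ‖-q ^ (j + 1)‖ := by
      simpa only [norm_neg, norm_pow, Real.norm_of_nonneg hq0] using
        (summable_nat_add_iff 1).mpr (summable_geometric_of_lt_one hq0 hq1)
    have hfac : ∀ j : ℕ, 1 + -q ^ (j + 1) ≠ 0 := fun j =>
      (sub_pos.mpr (pow_lt_one₀ hq0 hq1 j.succ_ne_zero)).ne'
    simpa only [qPochInf, ← sub_eq_add_neg] using tprod_one_add_ne_zero_of_summable hfac hsum
  exact (tprod_nonneg fun j => sub_nonneg.mpr (pow_le_one₀ hq0 hq1.le)).lt_of_ne' hne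

lemma one_sub_qPochInf_div_qPoch_le (hq0 : 0 ≤ q) (hq1 : q < 1) (m : ℕ) :
    |1 - qPochInf q / qPoch q m| ≤ q ^ (m + 1) / ((1 - q) * qPochInf q) := by
  have hP := qPochInf_pos hq0 hq1
  have hPm := qPoch_pos hq0 hq1 m
  have hle := qPochInf_le_qPoch hq0 hq1 m
  rw [abs_of_nonneg (sub_nonneg.mpr ((div_le_one hPm).mpr hle)), one_sub_div hPm.ne',
    ← div_div]
  exact div_le_div₀ (div_nonneg (pow_nonneg hq0 _) (sub_nonneg.mpr hq1.le))
    (qPoch_sub_qPochInf_le hq0 hq1 m) hP hle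

end QPochhammer

section NegQ3

variable {q : ℝ}

lemma one_add_geom_le_negQ3PochInf (hq0 : 0 ≤ q) (hq1 : q < 1) :
    1 + q ^ 3 / (1 - q) ≤ negQ3PochInf q := by
  have hsum : HasSum (fun j : ℕ => q ^ (j + 3)) (q ^ 3 / (1 - q)) := by
    simpa only [pow_add, div_eq_mul_inv, mul_comm] using
      (hasSum_geometric_of_lt_one hq0 hq1).mul_left (q ^ 3)
  refine le_of_tendsto_of_tendsto' (hsum.tendsto_sum_nat.const_add 1)
    (Real.multipliable_one_add_of_summable hsum.summable).hasProd.tendsto_prod_nat fun K => ?_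
  exact Finset.one_add_sum_le_prod_one_add _ fun j _ => pow_nonneg hq0 _

lemma one_le_negQ3PochInf (hq0 : 0 ≤ q) (hq1 : q < 1) : 1 ≤ negQ3PochInf q :=
  le_trans (le_add_of_nonneg_right (div_nonneg (pow_nonneg hq0 3) (sub_nonneg.mpr hq1.le)))
    (one_add_geom_le_negQ3PochInf hq0 hq1)

lemma inv_one_sub_le_two_mul_negQ3PochInf (hq0 : 0 ≤ q) (hq1 : q < 1) :
    (1 - q)⁻¹ ≤ 2 * negQ3PochInf q := by
  have h1q : 0 < 1 - q := sub_pos.mpr hq1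
  have hlow : (1 - q) + q ^ 3 ≤ (1 - q) * negQ3PochInf q := by
    have := mul_le_mul_of_nonneg_left (one_add_geom_le_negQ3PochInf hq0 hq1) h1q.le
    rwa [mul_add, mul_one, mul_div_cancel₀ _ h1q.ne'] at this
  -- `2 q³ - 2 q + 1 > 0` on `[0, 1]`, with minimum `1 - 4 / (3 √3)` at `q = 1 / √3`
  rw [inv_le_iff_one_le_mul₀' h1q]
  nlinarith [mul_nonneg hq0 (sq_nonneg (q - 3 / 5))]

end NegQ3

noncomputable def bqTerm (q x : ℝ) (k : ℕ) : ℝ := q ^ (k ^ 2) * x ^ k / qPoch q k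

noncomputable def aqTerm (q : ℝ) (w : ℂ) (k : ℕ) : ℂ :=
  (q : ℂ) ^ (k ^ 2) * (-w) ^ k / (qPoch q k : ℂ)

noncomputable def finiteAq (q : ℝ) (w : ℂ) (n : ℕ) : ℂ :=
  ∑ k ∈ Finset.range (n + 1),
    (q : ℂ) ^ (k ^ 2) * (-w) ^ k * (qPochInf q : ℂ) / ((qPoch q k : ℂ) * (qPoch q (n - k) : ℂ))

section Terms

variable {q x : ℝ}

lemma bqTerm_nonneg (hq0 : 0 ≤ q) (hq1 : q < 1) (hx : 0 ≤ x) (k : ℕ) : 0 ≤ bqTerm q x k :=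
  div_nonneg (by positivity) (qPoch_pos hq0 hq1 k).le

lemma norm_aqTerm (hq0 : 0 ≤ q) (hq1 : q < 1) (w : ℂ) (k : ℕ) :
    ‖aqTerm q w k‖ = bqTerm q ‖w‖ k := by
  rw [aqTerm, bqTerm, norm_div, norm_mul, norm_pow, norm_pow, norm_neg, Complex.norm_real,
    Complex.norm_real, Real.norm_of_nonneg hq0, Real.norm_of_nonneg (qPoch_pos hq0 hq1 k).le]

lemma bqTerm_add_le (hq0 : 0 ≤ q) (hq1 : q < 1) (hx : 0 ≤ x) {m : ℕ}
    (hm : q ^ (2 * m) * x ≤ 1 / 2) (j : ℕ) :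
    bqTerm q x (j + m) ≤ q ^ (m ^ 2) * x ^ m / qPochInf q * (1 / 2) ^ j := by
  have hnum : q ^ ((j + m) ^ 2) * x ^ (j + m) ≤ q ^ (m ^ 2) * x ^ m * (1 / 2) ^ j :=
    calc q ^ ((j + m) ^ 2) * x ^ (j + m)
        = q ^ (m ^ 2) * x ^ m * (q ^ (2 * m) * x) ^ j * q ^ (j ^ 2) := by ring
      _ ≤ q ^ (m ^ 2) * x ^ m * (1 / 2) ^ j * 1 := by
          gcongr
          exact pow_le_one₀ hq0 hq1.le
      _ = q ^ (m ^ 2) * x ^ m * (1 / 2) ^ j := mul_one _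
  calc bqTerm q x (j + m) ≤ q ^ ((j + m) ^ 2) * x ^ (j + m) / qPochInf q :=
        div_le_div_of_nonneg_left (by positivity) (qPochInf_pos hq0 hq1)
          (qPochInf_le_qPoch hq0 hq1 _)
    _ ≤ q ^ (m ^ 2) * x ^ m * (1 / 2) ^ j / qPochInf q := by
        gcongr
        exact (qPochInf_pos hq0 hq1).le
    _ = q ^ (m ^ 2) * x ^ m / qPochInf q * (1 / 2) ^ j := by ring

lemma summable_bqTerm (hq0 : 0 ≤ q) (hq1 : q < 1) (hx : 0 ≤ x) : Summable (bqTerm q x) := by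
  have hlim : Tendsto (fun m : ℕ => q ^ (2 * m) * x) atTop (𝓝 0) := by
    simpa only [pow_mul, zero_mul] using
      (tendsto_pow_atTop_nhds_zero_of_lt_one (by positivity) (by nlinarith)).mul_const x
  obtain ⟨m, hm⟩ := (hlim.eventually_le_const (by norm_num : (0 : ℝ) < 1 / 2)).exists
  refine (summable_nat_add_iff m).mp (Summable.of_nonneg_of_le
    (fun j => bqTerm_nonneg hq0 hq1 hx _) (bqTerm_add_le hq0 hq1 hx hm) ?_)
  exact (summable_geometric_of_lt_one (by norm_num) (by norm_num)).mul_left _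

lemma tsum_bqTerm_add_le (hq0 : 0 ≤ q) (hq1 : q < 1) (hx : 0 ≤ x) {m : ℕ}
    (hm : q ^ (2 * m) * x ≤ 1 / 2) :
    ∑' j, bqTerm q x (j + m) ≤ 2 * (q ^ (m ^ 2) * x ^ m / qPochInf q) := by
  refine (hasSum_le (bqTerm_add_le hq0 hq1 hx hm)
    ((summable_nat_add_iff m).mpr (summable_bqTerm hq0 hq1 hx)).hasSum
    (hasSum_geometric_two.mul_left _)).trans_eq (mul_comm _ _)

lemma summable_aqTerm (hq0 : 0 ≤ q) (hq1 : q < 1) (w : ℂ) : Summable (aqTerm q w) :=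
  .of_norm <| by simpa only [norm_aqTerm hq0 hq1] using summable_bqTerm hq0 hq1 (norm_nonneg w)

lemma one_le_Bq (hq0 : 0 ≤ q) (hq1 : q < 1) (hx : 0 ≤ x) : 1 ≤ Bq q x := by
  simpa [Bq, bqTerm, qPoch_zero] using
    (summable_bqTerm hq0 hq1 hx).le_tsum 0 fun k _ => bqTerm_nonneg hq0 hq1 hx k

end Terms

section ErrorBound

variable {q x : ℝ}

lemma summand_eq_aqTerm_mul (q : ℝ) (w : ℂ) (n k : ℕ) :
    (q : ℂ) ^ (k ^ 2) * (-w) ^ k * (qPochInf q : ℂ) / ((qPoch q k : ℂ) * (qPoch q (n - k) : ℂ))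
      = aqTerm q w k * ((qPochInf q / qPoch q (n - k) : ℝ) : ℂ) := by
  rw [aqTerm]
  push_cast
  ring

lemma norm_sum_sub_Aq_le (hq0 : 0 ≤ q) (hq1 : q < 1) (w : ℂ) (n : ℕ) :
    ‖finiteAq q w n - Aq q w‖
      ≤ (∑ k ∈ Finset.range (n + 1), bqTerm q ‖w‖ k * q ^ (n - k + 1)
          + ∑' j, bqTerm q ‖w‖ (j + (n + 1))) / ((1 - q) * qPochInf q) := by
  set D := (1 - q) * qPochInf q
  have hD : 0 < D := mul_pos (sub_pos.mpr hq1) (qPochInf_pos hq0 hq1)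
  have hD1 : D ≤ 1 := mul_le_one₀ (by linarith) (qPochInf_pos hq0 hq1).le (qPochInf_le_one hq0 hq1)
  have hsplit :
      Aq q w = ∑ k ∈ Finset.range (n + 1), aqTerm q w k + ∑' j, aqTerm q w (j + (n + 1)) :=
    ((summable_aqTerm hq0 hq1 w).sum_add_tsum_nat_add (n + 1)).symm
  have hterm (k : ℕ) : ‖aqTerm q w k * ((qPochInf q / qPoch q (n - k) : ℝ) : ℂ) - aqTerm q w k‖
      ≤ bqTerm q ‖w‖ k * q ^ (n - k + 1) / D := by
    rw [← mul_sub_one, norm_mul, norm_aqTerm hq0 hq1, ← Complex.ofReal_one, ← Complex.ofReal_sub,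
      Complex.norm_real, Real.norm_eq_abs, abs_sub_comm, mul_div_assoc]
    exact mul_le_mul_of_nonneg_left (one_sub_qPochInf_div_qPoch_le hq0 hq1 _)
      (bqTerm_nonneg hq0 hq1 (norm_nonneg w) k)
  have htail : ‖∑' j, aqTerm q w (j + (n + 1))‖ ≤ ∑' j, bqTerm q ‖w‖ (j + (n + 1)) := by
    have hsum : Summable fun j => ‖aqTerm q w (j + (n + 1))‖ := by
      simpa only [norm_aqTerm hq0 hq1] using
        (summable_nat_add_iff (n + 1)).mpr (summable_bqTerm hq0 hq1 (norm_nonneg w))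
    simpa only [norm_aqTerm hq0 hq1] using norm_tsum_le_tsum_norm hsum
  have htail_nonneg : 0 ≤ ∑' j, bqTerm q ‖w‖ (j + (n + 1)) :=
    tsum_nonneg fun j => bqTerm_nonneg hq0 hq1 (norm_nonneg w) _
  simp_rw [finiteAq, summand_eq_aqTerm_mul, hsplit, ← sub_sub, ← Finset.sum_sub_distrib]
  calc _ ≤ ∑ k ∈ Finset.range (n + 1), bqTerm q ‖w‖ k * q ^ (n - k + 1) / D
        + ∑' j, bqTerm q ‖w‖ (j + (n + 1)) :=
        (norm_sub_le _ _).trans (add_le_add ((norm_sum_le _ _).trans (Finset.sum_le_sum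
          fun k _ => hterm k)) htail)
    _ ≤ _ := by
        rw [← Finset.sum_div, add_div]
        exact add_le_add_right (le_div_self htail_nonneg hD hD1) _

lemma sum_bqTerm_mul_pow_add_tsum_le (hq0 : 0 < q) (hq1 : q < 1) (hx : 0 ≤ x) (n : ℕ) :
    ∑ k ∈ Finset.range (n + 1), bqTerm q x k * q ^ (n - k + 1) + ∑' j, bqTerm q x (j + (n + 1))
      ≤ Bq q x * q ^ ((n : ℝ) / 2) + ∑' j, bqTerm q x (j + (n / 2 + 1)) := by
  have hb := bqTerm_nonneg hq0.le hq1 hx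
  have hhead : ∑ k ∈ Finset.range (n / 2 + 1), bqTerm q x k * q ^ (n - k + 1)
      ≤ Bq q x * q ^ ((n : ℝ) / 2) :=
    calc ∑ k ∈ Finset.range (n / 2 + 1), bqTerm q x k * q ^ (n - k + 1)
        ≤ ∑ k ∈ Finset.range (n / 2 + 1), bqTerm q x k * q ^ ((n : ℝ) / 2) := by
          refine Finset.sum_le_sum fun k hk => mul_le_mul_of_nonneg_left
            (pow_le_rpow_of_le hq0 hq1.le ?_) (hb k)
          have : 2 * k ≤ n := by have := Finset.mem_range.mp hk; omega
          rw [div_le_iff₀ two_pos]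
          exact_mod_cast (by omega : n ≤ (n - k + 1) * 2)
      _ = (∑ k ∈ Finset.range (n / 2 + 1), bqTerm q x k) * q ^ ((n : ℝ) / 2) :=
          (Finset.sum_mul _ _ _).symm
      _ ≤ Bq q x * q ^ ((n : ℝ) / 2) :=
          mul_le_mul_of_nonneg_right ((summable_bqTerm hq0.le hq1 hx).sum_le_tsum _
            fun k _ => hb k) (Real.rpow_nonneg hq0.le _)
  have hmid : ∑ k ∈ Finset.Ico (n / 2 + 1) (n + 1), bqTerm q x k * q ^ (n - k + 1)
      ≤ ∑ k ∈ Finset.Ico (n / 2 + 1) (n + 1), bqTerm q x k :=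
    Finset.sum_le_sum fun k _ => mul_le_of_le_one_right (hb k) (pow_le_one₀ hq0.le hq1.le)
  rw [← Finset.sum_range_add_sum_Ico _ (by omega : n / 2 + 1 ≤ n + 1), add_assoc,
    ← (summable_bqTerm hq0.le hq1 hx).sum_Ico_add_tsum_nat_add (by omega : n / 2 + 1 ≤ n + 1)]
  gcongr

lemma norm_sum_sub_Aq_le_of_rpow_half_mul_le (hq0 : 0 < q) (hq1 : q < 1) (w : ℂ) {n : ℕ}
    (hn : q ^ ((n : ℝ) / 2) * ‖w‖ ≤ (1 - q) * qPochInf q / 2) :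
    ‖finiteAq q w n - Aq q w‖
      ≤ 2 * negQ3PochInf q * Bq q ‖w‖ / qPochInf q *
        (q ^ ((n : ℝ) / 2) + q ^ ((n : ℝ) ^ 2 / 4) * ‖w‖ ^ (n / 2)) := by
  set x := ‖w‖
  set m := n / 2 + 1
  set P := qPochInf q
  set D := (1 - q) * P with hDdef
  set E := q ^ ((n : ℝ) / 2)
  set F := q ^ ((n : ℝ) ^ 2 / 4) * x ^ (n / 2)
  have hP : 0 < P := qPochInf_pos hq0.le hq1
  have hD : 0 < D := mul_pos (sub_pos.mpr hq1) hP
  have hD1 : D ≤ 1 := mul_le_one₀ (by linarith) hP.le (qPochInf_le_one hq0.le hq1)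
  have hx : 0 ≤ x := norm_nonneg w
  have hm : q ^ (2 * m) * x ≤ 1 / 2 := by
    have : q ^ (2 * m) ≤ E := pow_le_rpow_of_le hq0 hq1.le <| by
      rw [div_le_iff₀ two_pos]
      exact_mod_cast (by omega : n ≤ 2 * m * 2)
    nlinarith
  -- `m² ≥ (n + 1)² / 4 ≥ n² / 4 + n / 2`
  have hqm : q ^ (m ^ 2) ≤ q ^ ((n : ℝ) ^ 2 / 4) * E := by
    rw [← Real.rpow_add hq0]
    refine pow_le_rpow_of_le hq0 hq1.le ?_
    have h2m : (n : ℝ) + 1 ≤ 2 * m := by exact_mod_cast (by omega : n + 1 ≤ 2 * m)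
    push_cast
    nlinarith [mul_le_mul h2m h2m (by positivity) (by positivity)]
  have htail : 2 * (q ^ (m ^ 2) * x ^ m / P) ≤ F * D / P := by
    rw [← mul_div_assoc]
    refine div_le_div_of_nonneg_right ?_ hP.le
    calc 2 * (q ^ (m ^ 2) * x ^ m) ≤ 2 * (q ^ ((n : ℝ) ^ 2 / 4) * E * (x ^ (n / 2) * x)) := by
          rw [pow_succ x (n / 2)]
          gcongr
      _ = 2 * F * (E * x) := by ring
      _ ≤ 2 * F * (D / 2) := by gcongr
      _ = F * D := by ring
  calc _ ≤ (Bq q x * E + F * D / P) / D :=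
        (norm_sum_sub_Aq_le hq0.le hq1 w n).trans <| div_le_div_of_nonneg_right
          ((sum_bqTerm_mul_pow_add_tsum_le hq0 hq1 hx n).trans <| add_le_add_right
            ((tsum_bqTerm_add_le hq0.le hq1 hx hm).trans htail) _) hD.le
    _ = (1 - q)⁻¹ * (Bq q x * E) / P + 1 * F / P := by
        have h1q : 1 - q ≠ 0 := (sub_pos.mpr hq1).ne'
        rw [hDdef]
        field_simp
    _ ≤ 2 * negQ3PochInf q * (Bq q x * E) / P + 2 * negQ3PochInf q * Bq q x * F / P := by
        have h3 := one_le_negQ3PochInf hq0.le hq1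
        have hB := one_le_Bq hq0.le hq1 hx
        gcongr
        · exact inv_one_sub_le_two_mul_negQ3PochInf hq0.le hq1
        · nlinarith
    _ = _ := by ring

lemma eventually_norm_sum_sub_Aq_le (hq0 : 0 < q) (hq1 : q < 1) (w : ℂ) :
    ∀ᶠ n : ℕ in atTop,
      ‖finiteAq q w n - Aq q w‖
        ≤ 2 * negQ3PochInf q * Bq q ‖w‖ / qPochInf q *
          (q ^ ((n : ℝ) / 2) + q ^ ((n : ℝ) ^ 2 / 4) * ‖w‖ ^ (n / 2)) := by
  have hlim : Tendsto (fun n : ℕ => q ^ ((n : ℝ) / 2) * ‖w‖) atTop (𝓝 0) := by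
    simpa only [Function.comp_apply, zero_mul] using
      ((tendsto_rpow_atTop_of_base_lt_one q (neg_one_lt_zero.trans hq0) hq1).comp
        (tendsto_natCast_atTop_atTop.atTop_div_const two_pos)).mul_const ‖w‖
  have hε : 0 < (1 - q) * qPochInf q / 2 :=
    half_pos (mul_pos (sub_pos.mpr hq1) (qPochInf_pos hq0.le hq1))
  filter_upwards [hlim.eventually_le_const hε] with n hn
  exact norm_sum_sub_Aq_le_of_rpow_half_mul_le hq0 hq1 w hn

end ErrorBound

theorem stmt_11_general (q : ℝ) (hq0 : 0 < q) (hq1 : q < 1) (z : ℂ)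
    (lam : ℝ) :
    ∃ N : ℕ, ∀ n : ℕ, N ≤ n → ∃ r : ℂ,
      (∑ k ∈ Finset.range (n + 1),
          (q : ℂ) ^ (k ^ 2) * (-Complex.exp (2 * (lam : ℂ) * (Real.pi : ℂ) * I) / z) ^ k *
            (qPochInf q : ℂ) / ((qPoch q k : ℂ) * (qPoch q (n - k) : ℂ)))
        = Aq q (Complex.exp (2 * (lam : ℂ) * (Real.pi : ℂ) * I) / z) + r ∧
      ‖r‖ ≤ 2 * negQ3PochInf q * Bq q ‖z‖⁻¹ / qPochInf q *
        (q ^ ((n : ℝ) / 2) + q ^ ((n : ℝ) ^ 2 / 4) / ‖z‖ ^ (n / 2)) := by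
  set w := Complex.exp (2 * (lam : ℂ) * (Real.pi : ℂ) * I) / z
  have hw : ‖w‖ = ‖z‖⁻¹ := by
    rw [norm_div, ← one_div]
    congr 1
    exact_mod_cast Complex.norm_exp_ofReal_mul_I (2 * lam * Real.pi)
  obtain ⟨N, hN⟩ := eventually_atTop.mp (eventually_norm_sum_sub_Aq_le hq0 hq1 w)
  refine ⟨N, fun n hn => ⟨_, (add_sub_cancel _ _).symm, ?_⟩⟩
  simpa only [finiteAq, neg_div, hw, inv_pow, ← div_eq_mul_inv] using hN n hn

theorem stmt_11 (q : ℝ) (hq0 : 0 < q) (hq1 : q < 1) (z : ℂ) (hz : z ≠ 0)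
    (lam : ℝ) (hlam0 : 0 ≤ lam) (hlam1 : lam < 1) :
    ∃ N : ℕ, ∀ n : ℕ, N ≤ n → ∃ r : ℂ,
      (∑ k ∈ Finset.range (n + 1),
          (q : ℂ) ^ (k ^ 2) * (-Complex.exp (2 * (lam : ℂ) * (Real.pi : ℂ) * I) / z) ^ k *
            (qPochInf q : ℂ) / ((qPoch q k : ℂ) * (qPoch q (n - k) : ℂ)))
        = Aq q (Complex.exp (2 * (lam : ℂ) * (Real.pi : ℂ) * I) / z) + r ∧
      ‖r‖ ≤ 2 * negQ3PochInf q * Bq q ‖z‖⁻¹ / qPochInf q *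
        (q ^ ((n : ℝ) / 2) + q ^ ((n : ℝ) ^ 2 / 4) / ‖z‖ ^ (n / 2)) :=
  stmt_11_general q hq0 hq1 z lam
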